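/- Let 𝒜 be a finite collection of networks satisfying joint positivity and containing at least one network that correctly specifies the interference structure. Under consistency, for every pair of distinct exposure levels c_k ≠ c_ℓ, the covariance of the NMR Horvitz–Thompson estimators satisfies: Cov_Z[μ̂_𝒜(c_k)(Z), μ̂_𝒜(c_ℓ)(Z)] = n^{-2} Σ_{i=1}^n Σ_{j≠i, p_ij^𝒜(c_k,c_ℓ)>0} (p_ij^𝒜(c_k,c_ℓ) − p_i^𝒜(c_k) p_j^𝒜(c_ℓ)) · Ỹ_i(c_k) Ỹ_j(c_ℓ) / (p_i^𝒜(c_k) p_j^𝒜(c_ℓ)) − n^{-2} Σ_{i=1}^n Σ_{j : p_ij^𝒜(c_k,c_ℓ)=0} Ỹ_i(c_k) Ỹ_j(c_ℓ). -/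

import Mathlib

open Finset

noncomputable section

open scoped Classical

/-- A network on `n` units: symmetric Boolean adjacency matrix with zero diagonal. -/
def IsNetwork {n : ℕ} (A : Fin n → Fin n → Bool) : Prop :=
  (∀ i j, A i j = A j i) ∧ ∀ i, A i i = false

/-- Real-valued indicator of a proposition. -/
def ind (p : Prop) [Decidable p] : ℝ := if p then 1 else 0

/-- Expectation of `g` with respect to the distribution `P` on the finite treatment space. -/
def expec {Z : Type} [Fintype Z] (P : Z → ℝ) (g : Z → ℝ) : ℝ := ∑ z, P z * g z

/-- Exposure probability `p_i^A(c)`. -/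
def pExp {n : ℕ} {Z C : Type} [Fintype Z] [DecidableEq C] (P : Z → ℝ)
    (f : Z → (Fin n → Bool) → C) (A : Fin n → Fin n → Bool) (i : Fin n) (c : C) : ℝ :=
  expec P (fun z => ind (f z (A i) = c))

/-- The network `A` satisfies positivity. -/
def Positivity {n : ℕ} {Z C : Type} [Fintype Z] [DecidableEq C] (P : Z → ℝ)
    (f : Z → (Fin n → Bool) → C) (A : Fin n → Fin n → Bool) : Prop :=
  ∀ (i : Fin n) (c : C), 0 < pExp P f A i c

/-- The network `A` correctly specifies the interference structure:
positivity together with `Y_i(z) = Ỹ_i(f(z, A_i))`. -/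
def CorrectlySpecifies {n : ℕ} {Z C : Type} [Fintype Z] [DecidableEq C] (P : Z → ℝ)
    (f : Z → (Fin n → Bool) → C) (Y : Fin n → Z → ℝ) (Yt : Fin n → C → ℝ)
    (A : Fin n → Fin n → Bool) : Prop :=
  Positivity P f A ∧ ∀ (i : Fin n) (z : Z), Y i z = Yt i (f z (A i))

/-- Mean potential outcome `μ(c)`. -/
def muBar {n : ℕ} {C : Type} (Yt : Fin n → C → ℝ) (c : C) : ℝ :=
  (1 / (n : ℝ)) * ∑ i, Yt i c

/-- Causal effect `τ(c, c')`. -/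
def tauBar {n : ℕ} {C : Type} (Yt : Fin n → C → ℝ) (c c' : C) : ℝ :=
  muBar Yt c - muBar Yt c'

/-- Horvitz–Thompson estimator of `μ(c)` using network `A` and observed outcomes `Yo`. -/
def muHat {n : ℕ} {Z C : Type} [Fintype Z] [DecidableEq C] (P : Z → ℝ)
    (f : Z → (Fin n → Bool) → C) (A : Fin n → Fin n → Bool) (Yo : Z → Fin n → ℝ)
    (c : C) (z : Z) : ℝ :=
  (1 / (n : ℝ)) * ∑ i, ind (f z (A i) = c) * Yo z i / pExp P f A i c

/-- Plug-in Horvitz–Thompson estimator of `τ(c, c')`. -/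
def tauHat {n : ℕ} {Z C : Type} [Fintype Z] [DecidableEq C] (P : Z → ℝ)
    (f : Z → (Fin n → Bool) → C) (A : Fin n → Fin n → Bool) (Yo : Z → Fin n → ℝ)
    (c c' : C) (z : Z) : ℝ :=
  muHat P f A Yo c z - muHat P f A Yo c' z

/-- Joint exposure probability `p_i^{(A, A')}(c, c')`. -/
def pJoint {n : ℕ} {Z C : Type} [Fintype Z] [DecidableEq C] (P : Z → ℝ)
    (f : Z → (Fin n → Bool) → C) (A A' : Fin n → Fin n → Bool) (i : Fin n) (c c' : C) : ℝ :=
  expec P (fun z => ind (f z (A i) = c) * ind (f z (A' i) = c'))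

/-- Conditional exposure probability `p_i(c; A ∣ c'; A')`. -/
def pCond {n : ℕ} {Z C : Type} [Fintype Z] [DecidableEq C] (P : Z → ℝ)
    (f : Z → (Fin n → Bool) → C) (A A' : Fin n → Fin n → Bool) (i : Fin n) (c c' : C) : ℝ :=
  pJoint P f A A' i c c' / pExp P f A' i c'

/-- Indicator `I_i^𝒜(z, c)` that unit `i` has exposure `c` under every network in `𝒜`. -/
def indAll {n : ℕ} {Z C : Type} [DecidableEq C] (f : Z → (Fin n → Bool) → C)
    (𝒜 : Finset (Fin n → Fin n → Bool)) (z : Z) (i : Fin n) (c : C) : ℝ :=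
  ∏ A ∈ 𝒜, ind (f z (A i) = c)

/-- Joint exposure probability `p_i^𝒜(c)`. -/
def pNMR {n : ℕ} {Z C : Type} [Fintype Z] [DecidableEq C] (P : Z → ℝ)
    (f : Z → (Fin n → Bool) → C) (𝒜 : Finset (Fin n → Fin n → Bool)) (i : Fin n) (c : C) : ℝ :=
  expec P (fun z => indAll f 𝒜 z i c)

/-- Joint positivity of the collection `𝒜`. -/
def JointPositivity {n : ℕ} {Z C : Type} [Fintype Z] [DecidableEq C] (P : Z → ℝ)
    (f : Z → (Fin n → Bool) → C) (𝒜 : Finset (Fin n → Fin n → Bool)) : Prop :=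
  ∀ (i : Fin n) (c : C), 0 < pNMR P f 𝒜 i c

/-- NMR Horvitz–Thompson estimator of `μ(c)`. -/
def muHatNMR {n : ℕ} {Z C : Type} [Fintype Z] [DecidableEq C] (P : Z → ℝ)
    (f : Z → (Fin n → Bool) → C) (𝒜 : Finset (Fin n → Fin n → Bool))
    (Yo : Z → Fin n → ℝ) (c : C) (z : Z) : ℝ :=
  (1 / (n : ℝ)) * ∑ i, indAll f 𝒜 z i c * Yo z i / pNMR P f 𝒜 i c

/-- NMR plug-in estimator of `τ(c, c')`. -/
def tauHatNMR {n : ℕ} {Z C : Type} [Fintype Z] [DecidableEq C] (P : Z → ℝ)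
    (f : Z → (Fin n → Bool) → C) (𝒜 : Finset (Fin n → Fin n → Bool))
    (Yo : Z → Fin n → ℝ) (c c' : C) (z : Z) : ℝ :=
  muHatNMR P f 𝒜 Yo c z - muHatNMR P f 𝒜 Yo c' z

/-- Pairwise joint exposure probability `p_{ij}^𝒜(c, c')`. -/
def pPairNMR {n : ℕ} {Z C : Type} [Fintype Z] [DecidableEq C] (P : Z → ℝ)
    (f : Z → (Fin n → Bool) → C) (𝒜 : Finset (Fin n → Fin n → Bool))
    (i j : Fin n) (c c' : C) : ℝ :=
  expec P (fun z => indAll f 𝒜 z i c * indAll f 𝒜 z j c')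

/-- Variance with respect to the treatment distribution `P`. -/
def varZ {Z : Type} [Fintype Z] (P : Z → ℝ) (g : Z → ℝ) : ℝ :=
  expec P (fun z => (g z - expec P g) ^ 2)

/-- Covariance with respect to the treatment distribution `P`. -/
def covZ {Z : Type} [Fintype Z] (P : Z → ℝ) (g h : Z → ℝ) : ℝ :=
  expec P (fun z => (g z - expec P g) * (h z - expec P h))

/-! Some network `A ∈ 𝒜` correctly specifies the interference, so on the event
`I_i^𝒜(Z, c) = 1` the observed outcome of unit `i` is `Ỹ_i(c)`. Hence `μ̂_𝒜(c)` is a linear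
combination of the indicators `I_i^𝒜(·, c)` with deterministic coefficients
`Ỹ_i(c) / (n p_i^𝒜(c))`, and the covariance expands bilinearly into the indicator
covariances `p_ij^𝒜(c_k, c_ℓ) - p_i^𝒜(c_k) p_j^𝒜(c_ℓ)`. A unit cannot have two different
exposures under `A`, so `p_ii^𝒜(c_k, c_ℓ) = 0`; since every `p_ij^𝒜` is nonnegative, the
pairs missing from the first sum are exactly those with `p_ij^𝒜(c_k, c_ℓ) = 0`, and each of
them contributes `-Ỹ_i(c_k) Ỹ_j(c_ℓ)`. -/

section Covariance

variable {Z : Type} [Fintype Z] (P : Z → ℝ)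

lemma expec_sum {ι : Type*} (s : Finset ι) (g : ι → Z → ℝ) :
    expec P (fun z => ∑ i ∈ s, g i z) = ∑ i ∈ s, expec P (g i) := by
  simp only [expec, mul_sum]
  exact sum_comm

lemma expec_const_mul (a : ℝ) (g : Z → ℝ) :
    expec P (fun z => a * g z) = a * expec P g := by
  simp only [expec, mul_sum]
  exact sum_congr rfl fun z _ => by ring

lemma covZ_eq_expec_mul_sub (hPsum : ∑ z, P z = 1) (g h : Z → ℝ) :
    covZ P g h = expec P (fun z => g z * h z) - expec P g * expec P h := by
  have expand : ∀ z, P z * ((g z - expec P g) * (h z - expec P h)) =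
      P z * (g z * h z) - expec P h * (P z * g z) - expec P g * (P z * h z) +
        expec P g * expec P h * P z := fun z => by ring
  simp only [covZ, expec] at expand ⊢
  simp only [expand, sum_add_distrib, sum_sub_distrib, ← mul_sum, hPsum]
  ring

lemma sum_mul_sub_expec_sum {ι : Type*} (s : Finset ι) (a : ι → ℝ) (g : ι → Z → ℝ)
    (z : Z) :
    ∑ i ∈ s, a i * g i z - expec P (fun z => ∑ i ∈ s, a i * g i z) =
      ∑ i ∈ s, a i * (g i z - expec P (g i)) := by
  simp only [expec_sum, expec_const_mul, mul_sub, sum_sub_distrib]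

lemma covZ_sum_mul_sum {ι κ : Type*} (s : Finset ι) (t : Finset κ) (a : ι → ℝ)
    (b : κ → ℝ) (g : ι → Z → ℝ) (h : κ → Z → ℝ) :
    covZ P (fun z => ∑ i ∈ s, a i * g i z) (fun z => ∑ j ∈ t, b j * h j z) =
      ∑ i ∈ s, ∑ j ∈ t, a i * b j * covZ P (g i) (h j) := by
  unfold covZ
  simp only [sum_mul_sub_expec_sum, sum_mul_sum]
  -- only now: `expec_sum` would otherwise split the inner expectations before centering
  simp only [expec_sum]
  refine sum_congr rfl fun i _ => sum_congr rfl fun j _ => ?_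
  rw [← expec_const_mul]
  exact sum_congr rfl fun z _ => by ring

end Covariance

lemma sum_sub_mul_div_eq_sum_filter_sub {ι : Type*} [Fintype ι] [DecidableEq ι]
    (w q y : ι → ℝ) (i : ι) (hw : ∀ j, 0 ≤ w j) (hwi : w i = 0) (hq : ∀ j, q j ≠ 0) :
    ∑ j, (w j - q j) * y j / q j =
      ∑ j ∈ univ.filter (fun j => j ≠ i ∧ 0 < w j), (w j - q j) * y j / q j -
        ∑ j ∈ univ.filter (fun j => w j = 0), y j := by
  have hcompl : univ.filter (fun j => ¬(j ≠ i ∧ 0 < w j)) = univ.filter (fun j => w j = 0) :=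
    filter_congr fun j _ => by
      constructor
      · intro h
        by_contra hj
        exact h ⟨by rintro rfl; exact hj hwi, (hw j).lt_of_ne' hj⟩
      · rintro hj ⟨-, hpos⟩
        exact hpos.ne' hj
  rw [← sum_filter_add_sum_filter_not univ (fun j => j ≠ i ∧ 0 < w j), hcompl, sub_eq_add_neg,
    ← sum_neg_distrib]
  congr 1
  refine sum_congr rfl fun j hj => ?_
  rw [(mem_filter.1 hj).2, zero_sub, neg_mul, neg_div, mul_div_cancel_left₀ _ (hq j)]

section Exposure

variable {n : ℕ} {Z C : Type} [DecidableEq C] (f : Z → (Fin n → Bool) → C)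
  {𝒜 : Finset (Fin n → Fin n → Bool)} {A : Fin n → Fin n → Bool}

lemma indAll_nonneg (z : Z) (i : Fin n) (c : C) :
    0 ≤ indAll f 𝒜 z i c :=
  prod_nonneg fun _ _ => by unfold ind; split <;> norm_num

lemma indAll_eq_zero_of_ne (hA : A ∈ 𝒜) {z : Z} {i : Fin n} {c : C} (h : f z (A i) ≠ c) :
    indAll f 𝒜 z i c = 0 :=
  prod_eq_zero hA (by simp [ind, h])

lemma indAll_mul_apply_exposure (hA : A ∈ 𝒜) (g : C → ℝ) (z : Z) (i : Fin n) (c : C) :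
    indAll f 𝒜 z i c * g (f z (A i)) = indAll f 𝒜 z i c * g c := by
  by_cases h : f z (A i) = c
  · rw [h]
  · rw [indAll_eq_zero_of_ne f hA h, zero_mul, zero_mul]

lemma indAll_mul_indAll_of_ne (hA : A ∈ 𝒜) {c c' : C} (hcc : c ≠ c') (z : Z) (i : Fin n) :
    indAll f 𝒜 z i c * indAll f 𝒜 z i c' = 0 := by
  by_cases h : f z (A i) = c
  · rw [indAll_eq_zero_of_ne f hA (h.trans_ne hcc), mul_zero]
  · rw [indAll_eq_zero_of_ne f hA h, zero_mul]

variable [Fintype Z] (P : Z → ℝ)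

lemma pPairNMR_nonneg (hP : ∀ z, 0 ≤ P z) (i j : Fin n) (c c' : C) :
    0 ≤ pPairNMR P f 𝒜 i j c c' :=
  sum_nonneg fun z _ => mul_nonneg (hP z) (mul_nonneg (indAll_nonneg f z i c)
    (indAll_nonneg f z j c'))

lemma pPairNMR_self_of_ne (hA : A ∈ 𝒜) {c c' : C} (hcc : c ≠ c') (i : Fin n) :
    pPairNMR P f 𝒜 i i c c' = 0 :=
  sum_eq_zero fun z _ => by simp only [indAll_mul_indAll_of_ne f hA hcc, mul_zero]

lemma covZ_indAll (hPsum : ∑ z, P z = 1) (i j : Fin n) (c c' : C) :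
    covZ P (fun z => indAll f 𝒜 z i c) (fun z => indAll f 𝒜 z j c') =
      pPairNMR P f 𝒜 i j c c' - pNMR P f 𝒜 i c * pNMR P f 𝒜 j c' :=
  covZ_eq_expec_mul_sub P hPsum _ _

lemma muHatNMR_eq_sum (hA : A ∈ 𝒜) {Yo : Z → Fin n → ℝ} {Yt : Fin n → C → ℝ}
    (hYo : ∀ z i, Yo z i = Yt i (f z (A i))) (c : C) (z : Z) :
    muHatNMR P f 𝒜 Yo c z = ∑ i, Yt i c / (n * pNMR P f 𝒜 i c) * indAll f 𝒜 z i c := by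
  rw [muHatNMR, mul_sum]
  refine sum_congr rfl fun i _ => ?_
  rw [hYo, indAll_mul_apply_exposure f hA (Yt i)]
  ring

end Exposure

theorem NMR_HT_covariance_general {n : ℕ} {Z C : Type} [Fintype Z] [DecidableEq C]
    (P : Z → ℝ) (hP : ∀ z, 0 ≤ P z) (hPsum : ∑ z, P z = 1)
    (f : Z → (Fin n → Bool) → C) (Y : Fin n → Z → ℝ) (Yt : Fin n → C → ℝ)
    (𝒜 : Finset (Fin n → Fin n → Bool))
    (hJoint : JointPositivity P f 𝒜)
    (h𝒜corr : ∃ A ∈ 𝒜, CorrectlySpecifies P f Y Yt A)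
    (Astar : Fin n → Fin n → Bool)
    (hAstar : CorrectlySpecifies P f Y Yt Astar)
    (Yo : Z → Fin n → ℝ) (hYo : ∀ (z : Z) (i : Fin n), Yo z i = Yt i (f z (Astar i))) :
    ∀ ck cl : C, ck ≠ cl →
      covZ P (fun z => muHatNMR P f 𝒜 Yo ck z) (fun z => muHatNMR P f 𝒜 Yo cl z) =
        (1 / (n : ℝ) ^ 2) *
            (∑ i, ∑ j ∈ univ.filter (fun j => j ≠ i ∧ 0 < pPairNMR P f 𝒜 i j ck cl),
              (pPairNMR P f 𝒜 i j ck cl - pNMR P f 𝒜 i ck * pNMR P f 𝒜 j cl) *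
                (Yt i ck * Yt j cl) / (pNMR P f 𝒜 i ck * pNMR P f 𝒜 j cl))
        - (1 / (n : ℝ) ^ 2) *
            (∑ i, ∑ j ∈ univ.filter (fun j => pPairNMR P f 𝒜 i j ck cl = 0),
              Yt i ck * Yt j cl) := by
  intro ck cl hne
  obtain ⟨A, hA, hAcorr⟩ := h𝒜corr
  have hYoA : ∀ z i, Yo z i = Yt i (f z (A i)) := fun z i => by
    rw [hYo, ← hAstar.2, hAcorr.2]
  calc covZ P (fun z => muHatNMR P f 𝒜 Yo ck z) (fun z => muHatNMR P f 𝒜 Yo cl z)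
      = ∑ i, ∑ j, Yt i ck / (n * pNMR P f 𝒜 i ck) * (Yt j cl / (n * pNMR P f 𝒜 j cl)) *
          (pPairNMR P f 𝒜 i j ck cl - pNMR P f 𝒜 i ck * pNMR P f 𝒜 j cl) := by
        simp only [muHatNMR_eq_sum f P hA hYoA, covZ_sum_mul_sum, covZ_indAll f P hPsum]
    _ = (1 / (n : ℝ) ^ 2) * ∑ i, ∑ j,
          (pPairNMR P f 𝒜 i j ck cl - pNMR P f 𝒜 i ck * pNMR P f 𝒜 j cl) *
            (Yt i ck * Yt j cl) / (pNMR P f 𝒜 i ck * pNMR P f 𝒜 j cl) := by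
        simp only [mul_sum]
        exact sum_congr rfl fun i _ => sum_congr rfl fun j _ => by ring
    _ = _ := by
        rw [← mul_sub, ← sum_sub_distrib]
        refine congrArg _ (sum_congr rfl fun i _ => ?_)
        exact sum_sub_mul_div_eq_sum_filter_sub _ _ _ i (pPairNMR_nonneg f P hP i · ck cl)
          (pPairNMR_self_of_ne f P hA hne i)
          fun j => mul_ne_zero (hJoint i ck).ne' (hJoint j cl).ne'

/-- Covariance of the NMR Horvitz–Thompson estimators at two distinct exposure levels. -/
theorem NMR_HT_covariance {n : ℕ} {Z C : Type} [Fintype Z] [Fintype C] [DecidableEq C]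
    (P : Z → ℝ) (hP : ∀ z, 0 ≤ P z) (hPsum : ∑ z, P z = 1)
    (f : Z → (Fin n → Bool) → C) (Y : Fin n → Z → ℝ) (Yt : Fin n → C → ℝ)
    (𝒜 : Finset (Fin n → Fin n → Bool))
    (h𝒜Net : ∀ A ∈ 𝒜, IsNetwork A)
    (hJoint : JointPositivity P f 𝒜)
    (h𝒜corr : ∃ A ∈ 𝒜, CorrectlySpecifies P f Y Yt A)
    (Astar : Fin n → Fin n → Bool) (hAstarNet : IsNetwork Astar)
    (hAstar : CorrectlySpecifies P f Y Yt Astar)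
    (Yo : Z → Fin n → ℝ) (hYo : ∀ (z : Z) (i : Fin n), Yo z i = Yt i (f z (Astar i))) :
    ∀ ck cl : C, ck ≠ cl →
      covZ P (fun z => muHatNMR P f 𝒜 Yo ck z) (fun z => muHatNMR P f 𝒜 Yo cl z) =
        (1 / (n : ℝ) ^ 2) *
            (∑ i, ∑ j ∈ univ.filter (fun j => j ≠ i ∧ 0 < pPairNMR P f 𝒜 i j ck cl),
              (pPairNMR P f 𝒜 i j ck cl - pNMR P f 𝒜 i ck * pNMR P f 𝒜 j cl) *
                (Yt i ck * Yt j cl) / (pNMR P f 𝒜 i ck * pNMR P f 𝒜 j cl))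
        - (1 / (n : ℝ) ^ 2) *
            (∑ i, ∑ j ∈ univ.filter (fun j => pPairNMR P f 𝒜 i j ck cl = 0),
              Yt i ck * Yt j cl) :=
  NMR_HT_covariance_general P hP hPsum f Y Yt 𝒜 hJoint h𝒜corr Astar hAstar Yo hYo
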